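/- Let p > 13 be a prime with p ≡ 4 (mod 5). The polynomial G(λ) := G^{((3p-7)/10)}(3/5, 7/10, 11/10 | λ) over F_p has no multiple roots in the algebraic closure of F_p. -/

import Mathlib

/-- The Pochhammer symbol `(x;ℓ) = x(x+1)⋯(x+ℓ-1)` in a field `K`. -/
noncomputable def poch {K : Type*} [Field K] (x : K) (ℓ : ℕ) : K :=
  ∏ i ∈ Finset.range ℓ, (x + (i : K))

/-- The truncated Gaussian hypergeometric series `G^(d)(a,b,c | z)` as a
polynomial in `z`: `Σ_{ℓ=0}^d ((a;ℓ)(b;ℓ))/((c;ℓ)(1;ℓ)) z^ℓ`. -/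
noncomputable def Gpoly {K : Type*} [Field K] (d : ℕ) (a b c : K) : Polynomial K :=
  ∑ ℓ ∈ Finset.range (d + 1),
    Polynomial.C (poch a ℓ * poch b ℓ / (poch c ℓ * poch 1 ℓ)) * Polynomial.X ^ ℓ


/-! Over `𝔽_p` the truncated series `G` still solves the hypergeometric equation
`z(1-z)G'' + (c - (a+b+1)z)G' = abG`: the coefficient recurrence only breaks at the truncation
degree `d = (3p-7)/10`, where the factor `b + d = 3p/10` vanishes. A root of multiplicity `m` of a
solution must satisfy the indicial equation there: `m(m-1) = 0` at an ordinary point and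
`m(m - (c-a-b)) = m(m + 1/5) = 0` at the singular point `1`, while `0` is no root as `G(0) = 1`.
Since `m ≤ d < p` and `p ∤ 5m + 1` for `p ≡ 9 mod 10`, this forces `m ≤ 1`. -/

open Polynomial

theorem hypergeometric_ode_of_coeff_recurrence {R : Type*} [CommRing R] {P : R[X]} {a b c : R}
    (h : ∀ n : ℕ, (n + 1) * (c + n) * P.coeff (n + 1) = (a + n) * (b + n) * P.coeff n) :
    X * (1 - X) * derivative (derivative P) + (C c - C (a + b + 1) * X) * derivative P =
      C (a * b) * P := by
  rw [← sub_eq_zero]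
  have hexpand : X * (1 - X) * derivative (derivative P) + (C c - C (a + b + 1) * X) *
      derivative P - C (a * b) * P = X * derivative (derivative P) + C c * derivative P -
        X * (X * derivative (derivative P)) - C (a + b + 1) * (X * derivative P) -
        C (a * b) * P := by ring
  rw [hexpand]
  ext n
  have hn := h n
  rcases n with _ | _ | n <;>
  · simp only [coeff_sub, coeff_add, coeff_C_mul, coeff_X_mul, coeff_X_mul_zero,
      coeff_derivative, coeff_zero]
    push_cast at hn ⊢
    linear_combination hn

section Indicial

variable {R : Type*} [CommRing R]

theorem X_sub_C_mul_derivative_X_sub_C_pow_mul (x : R) (m : ℕ) (u : R[X]) :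
    (X - C x) * derivative ((X - C x) ^ m * u) =
      (X - C x) ^ m * (C (m : R) * u + (X - C x) * derivative u) := by
  rcases m with _ | m
  · simp
  · rw [derivative_mul, derivative_X_sub_C_pow, Nat.add_sub_cancel]
    ring

variable [IsDomain R]

theorem rootMultiplicity_indicial_eq_zero {P a b c : R[X]} {x : R} (hP : P ≠ 0)
    (hode : (X - C x) * a * derivative (derivative P) + b * derivative P = c * P) :
    (P.rootMultiplicity x : R) * ((P.rootMultiplicity x - 1) * a.eval x + b.eval x) = 0 := by
  set m := P.rootMultiplicity x
  obtain ⟨u, hPu, hu⟩ := P.exists_eq_pow_rootMultiplicity_mul_and_not_dvd hP x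
  rw [dvd_iff_isRoot] at hu
  -- In terms of `θ = (X - x) d/dX`, which maps `(X - x)^m u` to `(X - x)^m (m + θ) u`, the
  -- equation times `X - x` reads `a (θ² - θ) P + b θ P = (X - x) c P`.
  set v := C (m : R) * u + (X - C x) * derivative u
  have hθP : (X - C x) * derivative P = (X - C x) ^ m * v := by
    rw [hPu]
    exact X_sub_C_mul_derivative_X_sub_C_pow_mul x m u
  have hθθP := X_sub_C_mul_derivative_X_sub_C_pow_mul x m v
  rw [← hθP, derivative_mul, derivative_sub, derivative_X, derivative_C] at hθθP
  have hreduced : (X - C x) ^ m * (a * (C (m : R) * v + (X - C x) * derivative v - v) + b * v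
      - (X - C x) * c * u) = 0 := by
    linear_combination (X - C x) * hode - a * hθθP + (a - b) * hθP + (X - C x) * c * hPu
  have hpow : (X - C x) ^ m ≠ 0 := pow_ne_zero _ (X_sub_C_ne_zero x)
  have hat := congrArg (eval x) ((mul_eq_zero.mp hreduced).resolve_left hpow)
  simp only [v, eval_add, eval_sub, eval_mul, eval_C, eval_X, sub_self, zero_mul, add_zero,
    eval_zero] at hat
  have hfactor : (m : R) * ((m - 1) * a.eval x + b.eval x) * u.eval x = 0 := by
    linear_combination hat
  exact (mul_eq_zero.mp hfactor).resolve_right hu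

theorem rootMultiplicity_mul_pred_mul_eval_eq_zero {P a b c : R[X]} {x : R} (hP : P ≠ 0)
    (hode : a * derivative (derivative P) + b * derivative P = c * P) :
    (P.rootMultiplicity x : R) * (P.rootMultiplicity x - 1) * a.eval x = 0 := by
  have hind := rootMultiplicity_indicial_eq_zero (x := x) (a := a) (b := (X - C x) * b)
    (c := (X - C x) * c) hP (by linear_combination (X - C x) * hode)
  simpa [mul_assoc] using hind

end Indicial

section Gpoly

variable {K : Type*} [Field K]

theorem poch_succ (x : K) (n : ℕ) : poch x (n + 1) = poch x n * (x + n) :=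
  Finset.prod_range_succ _ n

theorem poch_ne_zero {x : K} {n : ℕ} (h : ∀ i < n, x + i ≠ 0) : poch x n ≠ 0 :=
  Finset.prod_ne_zero_iff.mpr fun i hi => h i (Finset.mem_range.mp hi)

theorem coeff_Gpoly (d : ℕ) (a b c : K) (n : ℕ) :
    (Gpoly d a b c).coeff n =
      if n ≤ d then poch a n * poch b n / (poch c n * poch 1 n) else 0 := by
  simp only [Gpoly, finsetSum_coeff, coeff_C_mul, coeff_X_pow, mul_ite, mul_one, mul_zero,
    Finset.sum_ite_eq, Finset.mem_range, Nat.lt_succ_iff]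

theorem eval_zero_Gpoly (d : ℕ) (a b c : K) : (Gpoly d a b c).eval 0 = 1 := by
  simp [← coeff_zero_eq_eval_zero, coeff_Gpoly, poch]

theorem Gpoly_ne_zero (d : ℕ) (a b c : K) : Gpoly d a b c ≠ 0 := fun h => by
  simpa [h] using eval_zero_Gpoly d a b c

theorem natDegree_Gpoly_le (d : ℕ) (a b c : K) : (Gpoly d a b c).natDegree ≤ d :=
  natDegree_le_iff_coeff_eq_zero.mpr fun n hn => by
    rw [coeff_Gpoly, if_neg (not_le.mpr hn)]

theorem rootMultiplicity_Gpoly_le (d : ℕ) (a b c x : K) :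
    (Gpoly d a b c).rootMultiplicity x ≤ d := by
  classical
  rw [← count_roots]
  exact (Multiset.count_le_card x _).trans ((card_roots' _).trans (natDegree_Gpoly_le d a b c))

theorem map_Gpoly {L : Type*} [Field L] (f : K →+* L) (d : ℕ) (a b c : K) :
    (Gpoly d a b c).map f = Gpoly d (f a) (f b) (f c) := by
  simp [Gpoly, Polynomial.map_sum, poch]

variable {d : ℕ} {a b c : K}

theorem Gpoly_coeff_recurrence (htrunc : (a + d) * (b + d) = 0) (hc : ∀ i < d, c + i ≠ 0)
    (hone : ∀ i < d, (1 : K) + i ≠ 0) (n : ℕ) :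
    (n + 1) * (c + n) * (Gpoly d a b c).coeff (n + 1) =
      (a + n) * (b + n) * (Gpoly d a b c).coeff n := by
  rcases lt_trichotomy n d with hlt | rfl | hgt
  · have hpc := poch_ne_zero fun i (hi : i < n) => hc i (hi.trans hlt)
    have hp1 := poch_ne_zero fun i (hi : i < n) => hone i (hi.trans hlt)
    have hcn := hc n hlt
    have h1n := hone n hlt
    rw [coeff_Gpoly, coeff_Gpoly, if_pos (Nat.succ_le_of_lt hlt), if_pos hlt.le, poch_succ,
      poch_succ, poch_succ, poch_succ]
    field_simp
    ring
  · rw [coeff_Gpoly, coeff_Gpoly, if_neg (by omega), htrunc, zero_mul, mul_zero]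
  · rw [coeff_Gpoly, coeff_Gpoly, if_neg (by omega), if_neg (by omega), mul_zero, mul_zero]

theorem Gpoly_hypergeometric_ode (htrunc : (a + d) * (b + d) = 0) (hc : ∀ i < d, c + i ≠ 0)
    (hone : ∀ i < d, (1 : K) + i ≠ 0) :
    X * (1 - X) * derivative (derivative (Gpoly d a b c)) +
        (C c - C (a + b + 1) * X) * derivative (Gpoly d a b c) =
      C (a * b) * Gpoly d a b c :=
  hypergeometric_ode_of_coeff_recurrence (Gpoly_coeff_recurrence htrunc hc hone)

end Gpoly

theorem not_dvd_ten_mul_add_eleven {p i : ℕ} (hp9 : p % 10 = 9) (hi : i < (3 * p - 7) / 10) :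
    ¬p ∣ 10 * i + 11 := by
  rintro ⟨k, hk⟩
  have hk3 : k < 3 := by
    by_contra! hk3
    have : p * 3 ≤ p * k := Nat.mul_le_mul_left p hk3
    omega
  interval_cases k <;> omega

theorem not_dvd_five_mul_add_one {p m : ℕ} (hp9 : p % 10 = 9) (hm : m ≤ (3 * p - 7) / 10) :
    ¬p ∣ 5 * m + 1 := by
  rintro ⟨k, hk⟩
  have hk2 : k < 2 := by
    by_contra! hk2
    have : p * 2 ≤ p * k := Nat.mul_le_mul_left p hk2
    omega
  interval_cases k <;> omega

section CharP

variable {F : Type*} [Field F] {p : ℕ} [CharP F p]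

theorem ten_ne_zero_of_charP (hp9 : p % 10 = 9) : (10 : F) ≠ 0 := by
  have hp10 : ¬p ∣ 10 := fun h => by
    obtain rfl : p = 9 := by have := Nat.le_of_dvd (by norm_num) h; omega
    norm_num at h
  exact_mod_cast (CharP.cast_eq_zero_iff F p 10).not.mpr hp10

theorem Gpoly_hypergeometric_ode_charP (hp9 : p % 10 = 9) :
    X * (1 - X) *
          derivative (derivative (Gpoly ((3 * p - 7) / 10) (3 / 5 : F) (7 / 10) (11 / 10))) +
        (C (11 / 10) - C (3 / 5 + 7 / 10 + 1) * X) *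
          derivative (Gpoly ((3 * p - 7) / 10) (3 / 5 : F) (7 / 10) (11 / 10)) =
      C (3 / 5 * (7 / 10)) * Gpoly ((3 * p - 7) / 10) (3 / 5 : F) (7 / 10) (11 / 10) := by
  have hd : 10 * ((3 * p - 7) / 10) + 7 = 3 * p := by omega
  set d := (3 * p - 7) / 10
  have hcast (n : ℕ) : (n : F) = 0 ↔ p ∣ n := CharP.cast_eq_zero_iff F p n
  have h10 := ten_ne_zero_of_charP (F := F) hp9
  have htrunc : (3 / 5 + d) * (7 / 10 + d : F) = 0 := by
    have hd' : ((10 * d + 7 : ℕ) : F) = 0 := (hcast (10 * d + 7)).mpr ⟨3, by omega⟩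
    rw [show (7 / 10 + d : F) = (10 * d + 7 : ℕ) / 10 by push_cast; field_simp; ring, hd',
      zero_div, mul_zero]
  have hc : ∀ i < d, (11 / 10 : F) + i ≠ 0 := by
    intro i hi h
    apply not_dvd_ten_mul_add_eleven hp9 hi
    rw [← hcast]
    field_simp at h
    push_cast
    linear_combination h
  have hone : ∀ i < d, (1 : F) + i ≠ 0 := by
    intro i hi h
    apply Nat.not_dvd_of_pos_of_lt (Nat.succ_pos i) (show i + 1 < p by omega)
    rw [← hcast]
    push_cast
    linear_combination h
  exact Gpoly_hypergeometric_ode htrunc hc hone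

theorem rootMultiplicity_Gpoly_le_one (hp9 : p % 10 = 9) (x : F) :
    (Gpoly ((3 * p - 7) / 10) (3 / 5 : F) (7 / 10) (11 / 10)).rootMultiplicity x ≤ 1 := by
  have hode := Gpoly_hypergeometric_ode_charP (F := F) hp9
  have hmd := rootMultiplicity_Gpoly_le ((3 * p - 7) / 10) (3 / 5 : F) (7 / 10) (11 / 10) x
  have hG := Gpoly_ne_zero ((3 * p - 7) / 10) (3 / 5 : F) (7 / 10) (11 / 10)
  set G := Gpoly ((3 * p - 7) / 10) (3 / 5 : F) (7 / 10) (11 / 10)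
  set m := G.rootMultiplicity x
  have hcast (n : ℕ) : (n : F) = 0 ↔ p ∣ n := CharP.cast_eq_zero_iff F p n
  by_contra! h2m
  have hm0 : (m : F) ≠ 0 := (hcast m).not.mpr (Nat.not_dvd_of_pos_of_lt (by omega) (by omega))
  rcases eq_or_ne x 0 with rfl | hx0
  · have hm : m = 0 := rootMultiplicity_eq_zero (by simp [IsRoot, G, eval_zero_Gpoly])
    omega
  rcases eq_or_ne x 1 with rfl | hx1
  · have hind := rootMultiplicity_indicial_eq_zero (a := -X)
      (b := C (11 / 10) - C (3 / 5 + 7 / 10 + 1) * X) (c := C (3 / 5 * (7 / 10))) hG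
      (by rw [C_1]; linear_combination hode)
    simp only [eval_neg, eval_X, mul_neg, mul_one, neg_sub, map_add, map_one, eval_sub, eval_C,
      eval_mul, eval_add, eval_one, mul_eq_zero] at hind
    have h10 := ten_ne_zero_of_charP (F := F) hp9
    have h5 : (5 : F) ≠ 0 := fun h5 => h10 (by linear_combination 2 * h5)
    have h := hind.resolve_left hm0
    field_simp at h
    have h51 : ((5 * m + 1 : ℕ) : F) = 0 := by
      have h51' : (5 * (m : F) + 1) * 10 = 0 := by linear_combination -h
      exact_mod_cast (mul_eq_zero.mp h51').resolve_right h10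
    exact not_dvd_five_mul_add_one hp9 hmd ((hcast _).mp h51)
  · have hord := rootMultiplicity_mul_pred_mul_eval_eq_zero (x := x) hG hode
    simp only [eval_mul, eval_sub, eval_one, eval_X, mul_eq_zero, sub_eq_zero] at hord
    have hm1 : ((m - 1 : ℕ) : F) ≠ 0 :=
      (hcast _).not.mpr (Nat.not_dvd_of_pos_of_lt (by omega) (by omega))
    rw [Nat.cast_sub h2m.le, Nat.cast_one, Ne, sub_eq_zero] at hm1
    rcases hord with (h | h) | h | h
    · exact hm0 h
    · exact hm1 h
    · exact hx0 h
    · exact hx1 h.symm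

end CharP

theorem Gpoly_no_multiple_roots_general
    (p : ℕ) [Fact p.Prime] (hp5 : p % 5 = 4) :
    ∀ x : AlgebraicClosure (ZMod p),
      (Polynomial.map (algebraMap (ZMod p) (AlgebraicClosure (ZMod p)))
          (Gpoly ((3 * p - 7) / 10) ((3 : ZMod p) / 5) ((7 : ZMod p) / 10)
            ((11 : ZMod p) / 10))).rootMultiplicity x ≤ 1 := by
  have hp2 : p % 2 = 1 := (Fact.out : p.Prime).mod_two_eq_one_iff_ne_two.mpr (by omega)
  intro x
  simp only [map_Gpoly, map_div₀, map_ofNat]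
  exact rootMultiplicity_Gpoly_le_one (by omega) x

theorem Gpoly_no_multiple_roots
    (p : ℕ) [Fact p.Prime] (hp13 : 13 < p) (hp5 : p % 5 = 4) :
    ∀ x : AlgebraicClosure (ZMod p),
      (Polynomial.map (algebraMap (ZMod p) (AlgebraicClosure (ZMod p)))
          (Gpoly ((3 * p - 7) / 10) ((3 : ZMod p) / 5) ((7 : ZMod p) / 10)
            ((11 : ZMod p) / 10))).rootMultiplicity x ≤ 1 :=
  Gpoly_no_multiple_roots_general p hp5
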